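/- arXiv:2407.16825 — 7 statements merged into one kernel-verified Lean document; each statement's English description precedes it below -/
import Mathlib

section
/- Let a < b, let n ≥ 1, and let f ∈ C^{n−1}([a,b]) be such that f^{(n)}(x) exists at every x ∈ (a,b). Let s_1, …, s_n ⊆ [a,b] be nondegenerate segments with pairwise disjoint interiors, and let p ∈ ℙ_{n−1} satisfy the histopolation conditions μ_{s_i}(p) = μ_{s_i}(f) for i = 1, …, n. Then there exist points ξ_i ∈ s_i, i = 1, …, n, such that for every x ∈ [a,b] there exists ξ̄ ∈ [a,b] with f(x) − p(x) = (∏_{i=1}^n (x − ξ_i)) / n! · f^{(n)}(ξ̄). -/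
open Real Set Polynomial

/-- Segmental average: `μ_[a,b](f) = (b-a)⁻¹ ∫_a^b f`. -/
noncomputable def segAvg (a b : ℝ) (f : ℝ → ℝ) : ℝ := (b - a)⁻¹ * ∫ x in a..b, f x

/-!
On each segment `f - p` has zero mean, so by the mean value theorem for integrals it vanishes at an
interior point `ξ i`; as the interiors are disjoint, these `n` nodes are distinct. Hence `p` is the
Lagrange interpolant of `f` at the nodes and the classical error formula applies: for `x` not a
node, subtracting from `f - p` the multiple of `∏ i, (X - ξ i)` that vanishes at `x` leaves a
function with `n + 1` zeros, whose `n`-th derivative vanishes somewhere by iterated Rolle.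
-/

open Finset in
theorem Polynomial.iterate_derivative_card_prod_X_sub_C {R : Type*} [CommRing R]
    (S : Finset R) : derivative^[#S] (∏ a ∈ S, (X - C a)) = (#S).factorial := by
  simp [iterate_derivative_prod_X_sub_C le_rfl]

section PolynomialCalculus

variable {𝕜 : Type*} [NontriviallyNormedField 𝕜]

theorem Polynomial.contDiff_eval (q : 𝕜[X]) (n : WithTop ℕ∞) :
    ContDiff 𝕜 n fun x => q.eval x :=
  q.contDiff_aeval (R := 𝕜) n

theorem Polynomial.iterate_deriv_eval (q : 𝕜[X]) (k : ℕ) :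
    deriv^[k] (fun x => q.eval x) = fun x => (derivative^[k] q).eval x := by
  induction k generalizing q with
  | zero => rfl
  | succ k ih =>
    have hderiv : deriv (fun x => q.eval x) = fun x => q.derivative.eval x := by
      ext; exact Polynomial.deriv q
    rw [Function.iterate_succ_apply, Function.iterate_succ_apply, hderiv, ih]

theorem Polynomial.iteratedDerivWithin_eval (q : 𝕜[X]) (k : ℕ) {s : Set 𝕜} {x : 𝕜}
    (hs : UniqueDiffOn 𝕜 s) (hx : x ∈ s) :
    iteratedDerivWithin k (fun z => q.eval z) s x = (derivative^[k] q).eval x := by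
  rw [iteratedDerivWithin_eq_iteratedDeriv hs ((q.contDiff_eval k).contDiffAt) hx,
    iteratedDeriv_eq_iterate, q.iterate_deriv_eval]

theorem iteratedDerivWithin_succ_sub_eval {s : Set 𝕜} (hs : UniqueDiffOn 𝕜 s) {m : ℕ}
    {f : 𝕜 → 𝕜} (hf : ContDiffOn 𝕜 m f s) {x : 𝕜} (hx : x ∈ s)
    (hd : DifferentiableWithinAt 𝕜 (iteratedDerivWithin m f s) s x) (q : 𝕜[X]) :
    iteratedDerivWithin (m + 1) (fun z => f z - q.eval z) s x =
      iteratedDerivWithin (m + 1) f s x - (derivative^[m + 1] q).eval x := by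
  have hm : EqOn (iteratedDerivWithin m (fun z => f z - q.eval z) s)
      (fun y => iteratedDerivWithin m f s y - (derivative^[m] q).eval y) s := fun y hy => by
    dsimp only
    rw [← q.iteratedDerivWithin_eval m hs hy]
    exact iteratedDerivWithin_sub hy hs (hf y hy) (q.contDiff_eval m).contDiffWithinAt
  rw [iteratedDerivWithin_succ, derivWithin_congr hm (hm hx),
    derivWithin_fun_sub hd (Polynomial.differentiableWithinAt _), ← iteratedDerivWithin_succ,
    Polynomial.derivWithin _ (hs x hx), Function.iterate_succ_apply']

end PolynomialCalculus

theorem exists_eq_of_segAvg_eq {α β : ℝ} (hαβ : α < β) {f g : ℝ → ℝ}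
    (hf : ContinuousOn f (Icc α β)) (hg : ContinuousOn g (Icc α β))
    (havg : segAvg α β f = segAvg α β g) : ∃ c ∈ Ioo α β, f c = g c := by
  obtain ⟨c, hc, hfgc⟩ := exists_eq_interval_average (f := fun x => f x - g x) hαβ.ne
    (by rw [uIcc_of_le hαβ.le]; exact hf.sub hg)
  refine ⟨c, by rwa [uIoo_of_le hαβ.le] at hc, sub_eq_zero.mp ?_⟩
  rw [hfgc, interval_average_eq, smul_eq_mul, intervalIntegral.integral_sub
    (hf.intervalIntegrable_of_Icc hαβ.le) (hg.intervalIntegrable_of_Icc hαβ.le), mul_sub]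
  exact sub_eq_zero.mpr havg

theorem exists_strictMono_derivWithin_eq_zero {a b : ℝ} {h : ℝ → ℝ} {k : ℕ}
    (hh : ContinuousOn h (Icc a b)) (t : Fin (k + 1) → ℝ) (ht : StrictMono t)
    (hts : ∀ i, t i ∈ Icc a b) (hzero : ∀ i, h (t i) = 0) :
    ∃ c : Fin k → ℝ, StrictMono c ∧ (∀ i, c i ∈ Ioo a b) ∧
      ∀ i, derivWithin h (Icc a b) (c i) = 0 := by
  have hgap (i : Fin k) : ∃ c ∈ Ioo (t i.castSucc) (t i.succ), c ∈ Ioo a b ∧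
      derivWithin h (Icc a b) c = 0 := by
    obtain ⟨c, hc, hc0⟩ := exists_deriv_eq_zero (ht Fin.castSucc_lt_succ)
      (hh.mono (Icc_subset_Icc (hts _).1 (hts _).2)) (by rw [hzero, hzero])
    have hcab : c ∈ Ioo a b := ⟨(hts _).1.trans_lt hc.1, hc.2.trans_le (hts _).2⟩
    exact ⟨c, hc, hcab, by rwa [derivWithin_of_mem_nhds (Icc_mem_nhds hcab.1 hcab.2)]⟩
  choose c hct hcab hc0 using hgap
  refine ⟨c, fun i j hij => ?_, hcab, hc0⟩
  calc c i < t i.succ := (hct i).2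
    _ ≤ t j.castSucc := ht.monotone (Fin.succ_le_castSucc_iff.mpr hij)
    _ < c j := (hct j).1

/-- No differentiability of the `m`-th derivative is needed: where it fails, the `(m + 1)`-st
derivative is `0` by convention. -/
theorem exists_iteratedDerivWithin_eq_zero {a b : ℝ} (m : ℕ) {h : ℝ → ℝ}
    (hh : ContDiffOn ℝ m h (Icc a b)) (t : Fin (m + 2) → ℝ) (ht : StrictMono t)
    (hts : ∀ i, t i ∈ Icc a b) (hzero : ∀ i, h (t i) = 0) :
    ∃ c ∈ Ioo a b, iteratedDerivWithin (m + 1) h (Icc a b) c = 0 := by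
  have hab : a < b := (hts 0).1.trans_lt ((ht (by simp)).trans_le (hts 1).2)
  induction m generalizing h with
  | zero =>
    obtain ⟨c, -, hcab, hc0⟩ :=
      exists_strictMono_derivWithin_eq_zero hh.continuousOn t ht hts hzero
    exact ⟨c 0, hcab 0, by rw [iteratedDerivWithin_one]; exact hc0 0⟩
  | succ m ih =>
    obtain ⟨c, hc, hcab, hc0⟩ :=
      exists_strictMono_derivWithin_eq_zero hh.continuousOn t ht hts hzero
    rw [iteratedDerivWithin_succ']
    exact ih (hh.derivWithin (uniqueDiffOn_Icc hab) (by norm_cast)) c hc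
      (fun i => Ioo_subset_Icc_self (hcab i)) hc0

open Finset in
theorem exists_sub_eval_eq_prod_mul_iteratedDerivWithin {a b : ℝ} (hab : a < b) {m : ℕ}
    {f : ℝ → ℝ} (hf : ContDiffOn ℝ m f (Icc a b))
    (hf' : ∀ x ∈ Ioo a b,
      DifferentiableWithinAt ℝ (iteratedDerivWithin m f (Icc a b)) (Icc a b) x)
    (S : Finset ℝ) (hS : #S = m + 1) (hSab : ↑S ⊆ Icc a b) (p : ℝ[X])
    (hp : p.degree < (m + 1 : ℕ))
    (hfp : ∀ s ∈ S, f s = p.eval s) {x : ℝ} (hx : x ∈ Icc a b) :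
    ∃ c ∈ Ioo a b, f x - p.eval x =
      (∏ s ∈ S, (x - s)) / (m + 1).factorial * iteratedDerivWithin (m + 1) f (Icc a b) c := by
  by_cases hxS : x ∈ S
  · obtain ⟨c, hc⟩ := Set.nonempty_Ioo.mpr hab
    exact ⟨c, hc, by rw [prod_eq_zero hxS (sub_self x), hfp x hxS]; simp⟩
  set W : ℝ[X] := ∏ s ∈ S, (X - C s)
  have hW (z : ℝ) : W.eval z = ∏ s ∈ S, (z - s) := by simp [W, eval_prod]
  have hWx : W.eval x ≠ 0 := by
    rw [hW]
    exact prod_ne_zero_iff.mpr fun s hs => sub_ne_zero.mpr (ne_of_mem_of_not_mem hs hxS).symm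
  set K := (f x - p.eval x) / W.eval x with hK
  -- `q` interpolates `f` at the `m + 2` points of `insert x S`.
  set q := p + C K * W
  have hzero : ∀ z ∈ insert x S, f z - q.eval z = 0 := by
    intro z hz
    rcases mem_insert.mp hz with rfl | hzS
    · simp [q, K, div_mul_cancel₀ _ hWx]
    · simp [q, hW, prod_eq_zero hzS (sub_self z), hfp z hzS]
  have hcard : #(insert x S) = m + 2 := by rw [card_insert_of_notMem hxS, hS]
  have hZab : ↑(insert x S) ⊆ Icc a b := by rw [coe_insert]; exact Set.insert_subset hx hSab
  obtain ⟨c, hc, hc0⟩ := exists_iteratedDerivWithin_eq_zero m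
    (hf.sub (q.contDiff_eval m).contDiffOn) _ ((insert x S).orderEmbOfFin hcard).strictMono
    (fun i => hZab (orderEmbOfFin_mem _ hcard i))
    (fun i => hzero _ (orderEmbOfFin_mem _ hcard i))
  have hq : derivative^[m + 1] q = C (K * (m + 1).factorial) := by
    rw [iterate_map_add, iterate_derivative_eq_zero_of_degree_lt hp,
      iterate_derivative_C_mul, ← hS, iterate_derivative_card_prod_X_sub_C]
    simp
  rw [iteratedDerivWithin_succ_sub_eval (uniqueDiffOn_Icc hab) hf (Ioo_subset_Icc_self hc)
    (hf' c hc), hq, eval_C, sub_eq_zero] at hc0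
  refine ⟨c, hc, ?_⟩
  rw [hc0, ← hW, hK]
  field_simp

/-- Error representation formula for histopolation on segments with pairwise disjoint
interiors (Proposition 1). -/
theorem stmt_0 (a b : ℝ) (hab : a < b) (n : ℕ) (hn : 1 ≤ n) (f : ℝ → ℝ)
    (hf : ContDiffOn ℝ (n - 1 : ℕ) f (Set.Icc a b))
    (hf' : ∀ x ∈ Set.Ioo a b,
      DifferentiableWithinAt ℝ (iteratedDerivWithin (n - 1) f (Set.Icc a b)) (Set.Icc a b) x)
    (lo hi : Fin n → ℝ)
    (hseg : ∀ i, lo i < hi i)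
    (hsub : ∀ i, Set.Icc (lo i) (hi i) ⊆ Set.Icc a b)
    (hdisj : ∀ i j, i ≠ j → Set.Ioo (lo i) (hi i) ∩ Set.Ioo (lo j) (hi j) = ∅)
    (p : Polynomial ℝ) (hp : p ∈ Polynomial.degreeLT ℝ n)
    (hinterp : ∀ i, segAvg (lo i) (hi i) (fun x => p.eval x) = segAvg (lo i) (hi i) f) :
    ∃ ξ : Fin n → ℝ, (∀ i, ξ i ∈ Set.Icc (lo i) (hi i)) ∧
      ∀ x ∈ Set.Icc a b, ∃ ξb ∈ Set.Icc a b,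
        f x - p.eval x =
          (∏ i, (x - ξ i)) / (n.factorial : ℝ) * iteratedDerivWithin n f (Set.Icc a b) ξb := by
  obtain ⟨m, rfl⟩ : ∃ m, n = m + 1 := ⟨n - 1, (Nat.sub_add_cancel hn).symm⟩
  rw [Nat.add_sub_cancel] at hf hf'
  have hnode (i : Fin (m + 1)) : ∃ c ∈ Ioo (lo i) (hi i), f c = p.eval c :=
    exists_eq_of_segAvg_eq (hseg i) (hf.continuousOn.mono (hsub i))
      p.continuous.continuousOn (hinterp i).symm
  choose ξ hξ hfξ using hnode
  have hξinj : Function.Injective ξ := fun i j hij => by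
    by_contra hne
    exact (hdisj i j hne).subset ⟨hξ i, hij ▸ hξ j⟩
  refine ⟨ξ, fun i => Ioo_subset_Icc_self (hξ i), fun x hx => ?_⟩
  obtain ⟨c, hc, hfc⟩ := exists_sub_eval_eq_prod_mul_iteratedDerivWithin hab hf hf'
    (Finset.univ.image ξ) (by simp [Finset.card_image_of_injective _ hξinj])
    (by simpa [Set.subset_def] using fun i => hsub i (Ioo_subset_Icc_self (hξ i)))
    p (mem_degreeLT.mp hp) (by simpa using hfξ) hx
  rw [Finset.prod_image hξinj.injOn] at hfc
  exact ⟨c, Ioo_subset_Icc_self hc, hfc⟩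
end

section
/- Let s_1, …, s_n be nondegenerate segments contained in [a,b] with pairwise disjoint interiors. If p is a real polynomial of degree at most n−1 with ∫_{s_i} p(x) dx = 0 for every i = 1, …, n, then p = 0. Consequently, the linear map ℙ_{n−1} → ℝ^n, p ↦ (μ_{s_1}(p), …, μ_{s_n}(p)), is bijective, i.e., the set {s_1, …, s_n} is unisolvent for ℙ_{n−1}. -/
/-!
On each segment the vanishing integral of `p` forces, by Rolle's theorem applied to a primitive,
a zero of `p` in the interior. Disjointness of the interiors makes these `n` zeros distinct, which
a nonzero polynomial of degree `< n` cannot have. So the averaging map on `ℙ_{n-1}` is injective,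
hence bijective since both sides have dimension `n`.
-/

open Real Set Polynomial

theorem exists_mem_Ioo_eq_zero_of_intervalIntegral_eq_zero {f : ℝ → ℝ} {α β : ℝ} (hαβ : α < β)
    (hf : ContinuousOn f (Icc α β)) (h : ∫ x in α..β, f x = 0) :
    ∃ c ∈ Ioo α β, f c = 0 := by
  have hIcc : uIcc α β = Icc α β := uIcc_of_le hαβ.le
  have hprim_cont : ContinuousOn (fun u => ∫ x in α..u, f x) (Icc α β) := by
    rw [← hIcc]
    exact intervalIntegral.continuousOn_primitive_interval (hIcc ▸ hf.integrableOn_Icc)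
  have hprim_deriv : ∀ c ∈ Ioo α β, HasDerivAt (fun u => ∫ x in α..u, f x) (f c) c := by
    intro c hc
    have hcont : ContinuousAt f c := hf.continuousAt (Icc_mem_nhds hc.1 hc.2)
    refine intervalIntegral.integral_hasDerivAt_right ?_ ?_ hcont
    · exact (hf.mono (Icc_subset_Icc_right hc.2.le)).intervalIntegrable_of_Icc hc.1.le
    · exact (hf.mono Ioo_subset_Icc_self).stronglyMeasurableAtFilter isOpen_Ioo c hc
  exact exists_hasDerivAt_eq_zero hαβ hprim_cont (by simp [h]) hprim_deriv

theorem Polynomial.eq_zero_of_intervalIntegral_eval_eq_zero {ι : Type*} [Fintype ι]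
    {lo hi : ι → ℝ} (hseg : ∀ i, lo i < hi i)
    (hdisj : Pairwise fun i j => Disjoint (Ioo (lo i) (hi i)) (Ioo (lo j) (hi j)))
    {p : ℝ[X]} (hp : p.degree < Fintype.card ι) (hint : ∀ i, ∫ x in lo i..hi i, p.eval x = 0) :
    p = 0 := by
  choose r hr hroot using fun i =>
    exists_mem_Ioo_eq_zero_of_intervalIntegral_eq_zero (hseg i) p.continuous.continuousOn (hint i)
  have hr_inj : Function.Injective r := by
    intro i j hij
    by_contra hne
    exact (hdisj hne).ne_of_mem (hr i) (hr j) hij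
  exact eq_zero_of_degree_lt_of_eval_index_eq_zero Finset.univ hr_inj.injOn
    (by rwa [Finset.card_univ]) fun i _ => hroot i

theorem segAvg_eq_zero_iff {α β : ℝ} (hαβ : α < β) {f : ℝ → ℝ} :
    segAvg α β f = 0 ↔ ∫ x in α..β, f x = 0 := by
  simp [segAvg, sub_ne_zero.2 hαβ.ne']

noncomputable def segAvgLinearMap {ι : Type*} (lo hi : ι → ℝ) : ℝ[X] →ₗ[ℝ] ι → ℝ where
  toFun p i := segAvg (lo i) (hi i) fun x => p.eval x
  map_add' p q := by
    funext i
    simp only [segAvg, eval_add, Pi.add_apply]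
    rw [intervalIntegral.integral_add (p.continuous.intervalIntegrable _ _)
      (q.continuous.intervalIntegrable _ _), mul_add]
  map_smul' c p := by
    funext i
    simp only [segAvg, eval_smul, smul_eq_mul, RingHom.id_apply, Pi.smul_apply,
      intervalIntegral.integral_const_mul]
    ring

theorem stmt_1_general (n : ℕ) (lo hi : Fin n → ℝ)
    (hseg : ∀ i, lo i < hi i)
    (hdisj : ∀ i j, i ≠ j → Set.Ioo (lo i) (hi i) ∩ Set.Ioo (lo j) (hi j) = ∅) :
    (∀ p : Polynomial ℝ, p ∈ Polynomial.degreeLT ℝ n →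
      (∀ i, (∫ x in (lo i)..(hi i), p.eval x) = 0) → p = 0) ∧
    Function.Bijective (fun p : Polynomial.degreeLT ℝ n =>
      fun i : Fin n => segAvg (lo i) (hi i) fun x => Polynomial.eval x (p : Polynomial ℝ)) := by
  have hpairwise : Pairwise fun i j => Disjoint (Ioo (lo i) (hi i)) (Ioo (lo j) (hi j)) :=
    fun i j hij => Set.disjoint_iff_inter_eq_empty.2 (hdisj i j hij)
  have unisolvent : ∀ p ∈ degreeLT ℝ n, (∀ i, ∫ x in lo i..hi i, p.eval x = 0) → p = 0 :=
    fun p hp => eq_zero_of_intervalIntegral_eval_eq_zero hseg hpairwise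
      (by rwa [Fintype.card_fin, ← mem_degreeLT])
  let L := (segAvgLinearMap lo hi).domRestrict (degreeLT ℝ n)
  have hL_inj : Function.Injective L := by
    refine (injective_iff_map_eq_zero L).2 fun p hp => Subtype.ext <| unisolvent p p.2 fun i => ?_
    exact (segAvg_eq_zero_iff (hseg i)).1 (congrFun hp i)
  have hdim : Module.finrank ℝ (degreeLT ℝ n) = Module.finrank ℝ (Fin n → ℝ) := by
    rw [(degreeLTEquiv ℝ n).finrank_eq]
  exact ⟨unisolvent, hL_inj,
    (LinearMap.injective_iff_surjective_of_finrank_eq_finrank hdim).1 hL_inj⟩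

/-- Unisolvence of segments with pairwise disjoint interiors: a polynomial of degree
at most `n-1` with vanishing integrals over the `n` segments is zero, and consequently
the segmental average map `ℙ_{n-1} → ℝⁿ` is bijective. -/
theorem stmt_1 (a b : ℝ) (n : ℕ) (hn : 1 ≤ n) (lo hi : Fin n → ℝ)
    (hseg : ∀ i, lo i < hi i)
    (hsub : ∀ i, Set.Icc (lo i) (hi i) ⊆ Set.Icc a b)
    (hdisj : ∀ i j, i ≠ j → Set.Ioo (lo i) (hi i) ∩ Set.Ioo (lo j) (hi j) = ∅) :
    (∀ p : Polynomial ℝ, p ∈ Polynomial.degreeLT ℝ n →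
      (∀ i, (∫ x in (lo i)..(hi i), p.eval x) = 0) → p = 0) ∧
    Function.Bijective (fun p : Polynomial.degreeLT ℝ n =>
      fun i : Fin n => segAvg (lo i) (hi i) fun x => Polynomial.eval x (p : Polynomial ℝ)) :=
  stmt_1_general n lo hi hseg hdisj
end

section
/- Let m ≥ 2, 0 < α < 1 and c ≥ 1. Assume that the Chebyshev segments S^CL_m = {[x_{i−1}^CL, x_i^CL] : i = 1, …, m}, where x_i^CL = −cos(iπ/m), are unisolvent for ℙ_{m−1} and satisfy Λ_m(S^CL_m) ≤ c (log m + π/2). Let n ∈ ℕ with n ≥ (c/α) m² (log m + π/2), and let x_0^MC < x_1^MC < … < x_m^MC be points of the equispaced grid X^eq_{n+1} with |x_i^MC − x_i^CL| ≤ 1/n for all i = 0, …, m. Then the concatenated mock-Chebyshev segments S^MC_m = {[x_{i−1}^MC, x_i^MC] : i = 1, …, m} are unisolvent for ℙ_{m−1} and Λ_m(S^MC_m) ≤ (c/(1 − α)) (log m + π/2). -/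
/-!
Unisolvency: a polynomial of degree `< m` with zero average on `m` consecutive segments has a
root inside each of them (mean value theorem for integrals), hence `m` distinct roots.

Lebesgue constant: expand the mock-Chebyshev Lagrange basis in the Chebyshev one,
`ℓᴹᶜᵢ = ∑ₖ Bᵢₖ ℓᶜᴸₖ`, so that `B F = 1` for `Fₖⱼ = μ_{sᴹᶜⱼ}(ℓᶜᴸₖ)`. Moving the endpoints of a
segment by `d₀, d₁` changes the averages of the Chebyshev basis by at most
`2 Λ (d₀ + d₁) / |sᴹᶜⱼ|` in `ℓ¹`, where `Λ` bounds its Lebesgue constant. Chebyshev–Lobatto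
segments have length at least `3/m²` at the two ends (where the mock nodes are exact) and `6/m²`
inside, so the choice of `n` makes every column of `F - 1` have `ℓ¹`-norm at most `a`. Then every
column of `B` has `ℓ¹`-norm at most `1/(1-a)`, and `Λ(Sᴹᶜ) ≤ Λ(Sᶜᴸ)/(1-a)`.
-/

open Real Set Polynomial

/-- Segmental Lebesgue constant associated with a (Lagrange) basis `L`:
`max_{x ∈ [-1,1]} ∑ i |L i (x)|`. -/
noncomputable def lebC (n : ℕ) (L : Fin n → Polynomial ℝ) : ℝ :=
  sSup ((fun x => ∑ i : Fin n, |(L i).eval x|) '' Set.Icc (-1 : ℝ) 1)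

open MeasureTheory
open scoped Interval

theorem Matrix.sum_abs_le_of_mul_eq_one {ι : Type*} [Fintype ι] [DecidableEq ι]
    {B F : Matrix ι ι ℝ} (hBF : B * F = 1) {a : ℝ} (ha : a < 1)
    (hF : ∀ j, ∑ k, |(F - 1) k j| ≤ a) (j : ι) : ∑ i, |B i j| ≤ (1 - a)⁻¹ := by
  set S : ι → ℝ := fun j => ∑ i, |B i j|
  obtain ⟨j₀, -, hj₀⟩ := Finset.exists_max_image Finset.univ S ⟨j, Finset.mem_univ j⟩
  have hS₀ : 0 ≤ S j₀ := Finset.sum_nonneg fun i _ => abs_nonneg _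
  -- `B = 1 - B (F - 1)` gives `S ≤ 1 + a S` for the largest column sum `S` of `B`
  have hB : B = 1 - B * (F - 1) := by rw [mul_sub, hBF, mul_one, sub_sub_cancel]
  have hentry (i : ι) : |B i j₀| ≤ |(1 : Matrix ι ι ℝ) i j₀| + ∑ k, |B i k| * |(F - 1) k j₀| := by
    calc |B i j₀| = |(1 : Matrix ι ι ℝ) i j₀ - ∑ k, B i k * (F - 1) k j₀| := by
          rw [← Matrix.mul_apply, ← Matrix.sub_apply, ← hB]
      _ ≤ |(1 : Matrix ι ι ℝ) i j₀| + |∑ k, B i k * (F - 1) k j₀| := abs_sub _ _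
      _ ≤ _ := by grw [Finset.abs_sum_le_sum_abs]; simp only [abs_mul, le_refl]
  have hSj₀ : S j₀ ≤ 1 + S j₀ * a :=
    calc S j₀ ≤ ∑ i, (|(1 : Matrix ι ι ℝ) i j₀| + ∑ k, |B i k| * |(F - 1) k j₀|) :=
          Finset.sum_le_sum fun i _ => hentry i
      _ = 1 + ∑ k, S k * |(F - 1) k j₀| := by
          rw [Finset.sum_add_distrib, Finset.sum_comm]
          simp [S, Matrix.one_apply, Finset.sum_mul, apply_ite]
      _ ≤ 1 + ∑ k, S j₀ * |(F - 1) k j₀| := by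
          gcongr with k
          exact hj₀ k (Finset.mem_univ k)
      _ ≤ 1 + S j₀ * a := by rw [← Finset.mul_sum]; gcongr; exact hF j₀
  calc S j ≤ S j₀ := hj₀ j (Finset.mem_univ j)
    _ ≤ (1 - a)⁻¹ := by rw [← one_div, le_div_iff₀ (sub_pos.2 ha)]; linarith

namespace SegmentalInterpolation

variable {m : ℕ}

theorem segAvg_eq_interval_average (a b : ℝ) (f : ℝ → ℝ) : segAvg a b f = ⨍ x in a..b, f x := by
  rw [interval_average_eq, smul_eq_mul, segAvg]

theorem exists_isRoot_of_segAvg_eq_zero {p : ℝ[X]} {a b : ℝ} (hab : a < b)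
    (h : segAvg a b (fun x => p.eval x) = 0) : ∃ ξ ∈ Ioo a b, p.IsRoot ξ := by
  obtain ⟨ξ, hξ, hξavg⟩ := exists_eq_interval_average hab.ne p.continuous.continuousOn
  rw [uIoo_of_lt hab] at hξ
  exact ⟨ξ, hξ, by rwa [← segAvg_eq_interval_average, h] at hξavg⟩

noncomputable def segAvgMap (m : ℕ) (w : Fin (m + 1) → ℝ) :
    degreeLT ℝ m →ₗ[ℝ] Fin m → ℝ where
  toFun p i := segAvg (w i.castSucc) (w i.succ) fun x => (p : ℝ[X]).eval x
  map_add' p q := by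
    funext i
    simp only [segAvg, Submodule.coe_add, Pi.add_apply, eval_add]
    rw [intervalIntegral.integral_add ((p : ℝ[X]).continuous.intervalIntegrable _ _)
      ((q : ℝ[X]).continuous.intervalIntegrable _ _), mul_add]
  map_smul' r p := by
    funext i
    simp only [segAvg, SetLike.val_smul, eval_smul, smul_eq_mul, RingHom.id_apply, Pi.smul_apply,
      intervalIntegral.integral_const_mul]
    ring

@[simp]
theorem segAvgMap_apply (w : Fin (m + 1) → ℝ) (p : degreeLT ℝ m) (i : Fin m) :
    segAvgMap m w p i = segAvg (w i.castSucc) (w i.succ) fun x => (p : ℝ[X]).eval x :=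
  rfl

theorem segAvgMap_injective {w : Fin (m + 1) → ℝ} (hw : StrictMono w) :
    Function.Injective (segAvgMap m w) := by
  rw [← LinearMap.ker_eq_bot, Submodule.eq_bot_iff]
  rintro ⟨p, hp⟩ hker
  have hroot (i : Fin m) : ∃ ξ ∈ Ioo (w i.castSucc) (w i.succ), p.IsRoot ξ :=
    exists_isRoot_of_segAvg_eq_zero (hw i.castSucc_lt_succ) (congrFun hker i)
  choose ξ hξ hξroot using hroot
  have hξmono : StrictMono ξ := fun i j hij =>
    calc ξ i < w i.succ := (hξ i).2
      _ ≤ w j.castSucc := hw.monotone (Fin.succ_le_castSucc_iff.2 hij)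
      _ < ξ j := (hξ j).1
  have hp0 : p = 0 := Polynomial.eq_zero_of_degree_lt_of_eval_index_eq_zero Finset.univ
    hξmono.injective.injOn (by simpa using mem_degreeLT.1 hp) fun i _ => hξroot i
  simp [hp0]

theorem segAvgMap_bijective {w : Fin (m + 1) → ℝ} (hw : StrictMono w) :
    Function.Bijective (segAvgMap m w) := by
  have : Module.Finite ℝ (degreeLT ℝ m) := .equiv (degreeLTEquiv ℝ m).symm
  have hrank : Module.finrank ℝ (degreeLT ℝ m) = Module.finrank ℝ (Fin m → ℝ) := by
    rw [(degreeLTEquiv ℝ m).finrank_eq]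
  exact ⟨segAvgMap_injective hw,
    (LinearMap.injective_iff_surjective_of_finrank_eq_finrank hrank).1 (segAvgMap_injective hw)⟩

def IsSegLagrangeBasis (w : Fin (m + 1) → ℝ) (L : Fin m → ℝ[X]) : Prop :=
  (∀ i, L i ∈ degreeLT ℝ m) ∧
    ∀ i j, segAvg (w j.castSucc) (w j.succ) (fun x => (L i).eval x) = if i = j then 1 else 0

theorem IsSegLagrangeBasis.eq_sum_segAvg_smul {w : Fin (m + 1) → ℝ} {L : Fin m → ℝ[X]}
    (hL : IsSegLagrangeBasis w L) (hw : StrictMono w) {p : ℝ[X]} (hp : p ∈ degreeLT ℝ m) :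
    p = ∑ k, segAvg (w k.castSucc) (w k.succ) (fun x => p.eval x) • L k := by
  set c : Fin m → ℝ := segAvgMap m w ⟨p, hp⟩
  have hsum : segAvgMap m w (∑ k, c k • ⟨L k, hL.1 k⟩) = c := by
    funext j
    rw [map_sum]
    simp only [map_smul, Finset.sum_apply, Pi.smul_apply, segAvgMap_apply, hL.2,
      smul_eq_mul, mul_ite, mul_one, mul_zero, Finset.sum_ite_eq', Finset.mem_univ, if_true]
  have := congrArg Subtype.val (segAvgMap_injective hw hsum).symm
  rwa [Submodule.coe_sum] at this

theorem sum_abs_eval_le_lebC (L : Fin m → ℝ[X]) {x : ℝ} (hx : x ∈ Icc (-1 : ℝ) 1) :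
    ∑ i, |(L i).eval x| ≤ lebC m L :=
  le_csSup ((isCompact_Icc.image (by fun_prop)).bddAbove) ⟨x, hx, rfl⟩

theorem lebC_le {L : Fin m → ℝ[X]} {C : ℝ} (h : ∀ x ∈ Icc (-1 : ℝ) 1, ∑ i, |(L i).eval x| ≤ C) :
    lebC m L ≤ C :=
  csSup_le ⟨_, 0, by norm_num, rfl⟩ (by rintro _ ⟨x, hx, rfl⟩; exact h x hx)

section Perturbation

variable {ι : Type*} [Fintype ι] {L : ι → ℝ[X]} {Λ : ℝ}

theorem sum_abs_integral_le (hΛ : ∀ x ∈ Icc (-1 : ℝ) 1, ∑ k, |(L k).eval x| ≤ Λ) {u v : ℝ}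
    (hu : u ∈ Icc (-1 : ℝ) 1) (hv : v ∈ Icc (-1 : ℝ) 1) :
    ∑ k, |∫ x in u..v, (L k).eval x| ≤ Λ * |v - u| := by
  have hsub : Ι u v ⊆ Icc (-1) 1 := uIoc_subset_uIcc.trans (uIcc_subset_Icc hu hv)
  calc ∑ k, |∫ x in u..v, (L k).eval x| ≤ ∑ k, ∫ x in Ι u v, |(L k).eval x| :=
        Finset.sum_le_sum fun k _ => by
          simpa using intervalIntegral.norm_integral_le_integral_norm_uIoc
            (f := fun x => (L k).eval x) (μ := volume) (a := u) (b := v)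
    _ = ∫ x in Ι u v, ∑ k, |(L k).eval x| :=
        (integral_finsetSum _ fun k _ => (L k).continuous.abs.integrableOn_uIoc).symm
    _ ≤ ∫ _ in Ι u v, Λ :=
        setIntegral_mono_on
          (continuous_finsetSum _ fun k _ => (L k).continuous.abs).integrableOn_uIoc
          continuous_const.integrableOn_uIoc measurableSet_uIoc fun x hx => hΛ x (hsub hx)
    _ = Λ * |v - u| := by simp [measureReal_def, Real.volume_uIoc, mul_comm]

theorem sum_abs_segAvg_le (hΛ : ∀ x ∈ Icc (-1 : ℝ) 1, ∑ k, |(L k).eval x| ≤ Λ) {u v : ℝ}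
    (hu : u ∈ Icc (-1 : ℝ) 1) (hv : v ∈ Icc (-1 : ℝ) 1) (huv : u < v) :
    ∑ k, |segAvg u v fun x => (L k).eval x| ≤ Λ := by
  have hlen : 0 < v - u := sub_pos.2 huv
  simp only [segAvg, abs_mul, abs_inv, abs_of_pos hlen, ← Finset.mul_sum]
  calc (v - u)⁻¹ * ∑ k, |∫ x in u..v, (L k).eval x| ≤ (v - u)⁻¹ * (Λ * |v - u|) :=
        mul_le_mul_of_nonneg_left (sum_abs_integral_le hΛ hu hv) (inv_nonneg.2 hlen.le)
    _ = Λ := by rw [abs_of_pos hlen]; field_simp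

theorem sub_mul_segAvg (a b : ℝ) (f : ℝ → ℝ) : (b - a) * segAvg a b f = ∫ x in a..b, f x := by
  rcases eq_or_ne a b with rfl | hab
  · simp
  · rw [segAvg, mul_inv_cancel_left₀ (sub_ne_zero.2 hab.symm)]

theorem sub_mul_segAvg_sub_segAvg {f : ℝ → ℝ} (hf : Continuous f) (y₀ y₁ z₀ z₁ : ℝ) :
    (y₁ - y₀) * (segAvg y₀ y₁ f - segAvg z₀ z₁ f) = (∫ x in y₀..z₀, f x) + (∫ x in z₁..y₁, f x)
      - ((y₁ - y₀) - (z₁ - z₀)) * segAvg z₀ z₁ f := by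
  have hsplit : (∫ x in y₀..y₁, f x)
      = (∫ x in y₀..z₀, f x) + (∫ x in z₀..z₁, f x) + ∫ x in z₁..y₁, f x := by
    simp only [intervalIntegral.integral_add_adjacent_intervals (hf.intervalIntegrable _ _)
      (hf.intervalIntegrable _ _)]
  linear_combination sub_mul_segAvg y₀ y₁ f - sub_mul_segAvg z₀ z₁ f + hsplit

theorem sum_abs_segAvg_sub_segAvg_le (hΛ : ∀ x ∈ Icc (-1 : ℝ) 1, ∑ k, |(L k).eval x| ≤ Λ)
    {y₀ y₁ z₀ z₁ : ℝ} (hy₀ : y₀ ∈ Icc (-1 : ℝ) 1) (hy₁ : y₁ ∈ Icc (-1 : ℝ) 1)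
    (hz₀ : z₀ ∈ Icc (-1 : ℝ) 1) (hz₁ : z₁ ∈ Icc (-1 : ℝ) 1) (hy : y₀ < y₁) (hz : z₀ < z₁) :
    (y₁ - y₀) * ∑ k, |(segAvg y₀ y₁ fun x => (L k).eval x) - segAvg z₀ z₁ fun x => (L k).eval x|
      ≤ 2 * Λ * (|y₀ - z₀| + |y₁ - z₁|) := by
  set μz : ι → ℝ := fun k => segAvg z₀ z₁ fun x => (L k).eval x
  set Δ := (y₁ - y₀) - (z₁ - z₀)
  have hΛ₀ : 0 ≤ Λ :=
    (Finset.sum_nonneg fun k _ => abs_nonneg _).trans (hΛ 0 ⟨by norm_num, by norm_num⟩)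
  have hΔ : |Δ| ≤ |y₀ - z₀| + |y₁ - z₁| := by
    calc |Δ| = |(y₁ - z₁) - (y₀ - z₀)| := by congr 1; ring
      _ ≤ |y₁ - z₁| + |y₀ - z₀| := abs_sub _ _
      _ = |y₀ - z₀| + |y₁ - z₁| := add_comm _ _
  calc (y₁ - y₀) * ∑ k, |(segAvg y₀ y₁ fun x => (L k).eval x) - μz k|
      = ∑ k, |(∫ x in y₀..z₀, (L k).eval x) + (∫ x in z₁..y₁, (L k).eval x) - Δ * μz k| := by
        rw [Finset.mul_sum]
        refine Finset.sum_congr rfl fun k _ => ?_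
        rw [← sub_mul_segAvg_sub_segAvg (L k).continuous, abs_mul, abs_of_pos (sub_pos.2 hy)]
    _ ≤ ∑ k, (|∫ x in y₀..z₀, (L k).eval x| + |∫ x in z₁..y₁, (L k).eval x| + |Δ| * |μz k|) :=
        Finset.sum_le_sum fun k _ =>
          (abs_sub _ _).trans (by rw [abs_mul]; gcongr; exact abs_add_le _ _)
    _ = (∑ k, |∫ x in y₀..z₀, (L k).eval x|) + (∑ k, |∫ x in z₁..y₁, (L k).eval x|)
          + |Δ| * ∑ k, |μz k| := by
        rw [Finset.sum_add_distrib, Finset.sum_add_distrib, Finset.mul_sum]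
    _ ≤ Λ * |z₀ - y₀| + Λ * |y₁ - z₁| + (|y₀ - z₀| + |y₁ - z₁|) * Λ := by
        gcongr
        · exact sum_abs_integral_le hΛ hy₀ hz₀
        · exact sum_abs_integral_le hΛ hz₁ hy₁
        · exact sum_abs_segAvg_le hΛ hz₀ hz₁ hz
    _ = 2 * Λ * (|y₀ - z₀| + |y₁ - z₁|) := by rw [abs_sub_comm z₀]; ring

end Perturbation

theorem segAvg_sum_smul {ι : Type*} [Fintype ι] (a b : ℝ) (c : ι → ℝ) (p : ι → ℝ[X]) :
    (segAvg a b fun x => (∑ k, c k • p k).eval x)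
      = ∑ k, c k * segAvg a b fun x => (p k).eval x := by
  simp only [segAvg, eval_finsetSum, eval_smul, smul_eq_mul]
  rw [intervalIntegral.integral_finsetSum
    fun k _ => ((p k).continuous.const_mul _).intervalIntegrable _ _, Finset.mul_sum]
  refine Finset.sum_congr rfl fun k _ => ?_
  rw [intervalIntegral.integral_const_mul]
  ring

theorem sum_abs_eval_le_of_eq_sum_smul {ι κ : Type*} [Fintype ι] [Fintype κ] {L : κ → ℝ[X]}
    {L' : ι → ℝ[X]} {B : ι → κ → ℝ} (hL' : ∀ i, L' i = ∑ k, B i k • L k) {s : ℝ}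
    (hB : ∀ k, ∑ i, |B i k| ≤ s) (x : ℝ) :
    ∑ i, |(L' i).eval x| ≤ s * ∑ k, |(L k).eval x| :=
  calc ∑ i, |(L' i).eval x| ≤ ∑ i, ∑ k, |B i k| * |(L k).eval x| := by
        refine Finset.sum_le_sum fun i _ => ?_
        simp only [hL', eval_finsetSum, eval_smul, smul_eq_mul, ← abs_mul]
        exact Finset.abs_sum_le_sum_abs _ _
    _ = ∑ k, (∑ i, |B i k|) * |(L k).eval x| := by
        rw [Finset.sum_comm]; simp only [Finset.sum_mul]
    _ ≤ s * ∑ k, |(L k).eval x| := by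
        rw [Finset.mul_sum]; gcongr with k; exact hB k

theorem IsSegLagrangeBasis.lebC_le_div_one_sub {w y : Fin (m + 1) → ℝ} {L L' : Fin m → ℝ[X]}
    (hL : IsSegLagrangeBasis w L) (hL' : IsSegLagrangeBasis y L') (hw : StrictMono w)
    (hy : StrictMono y) (hwI : ∀ i, w i ∈ Icc (-1 : ℝ) 1) (hyI : ∀ i, y i ∈ Icc (-1 : ℝ) 1)
    {a : ℝ} (ha : a < 1)
    (hclose : ∀ j : Fin m, 2 * lebC m L * (|y j.castSucc - w j.castSucc| + |y j.succ - w j.succ|)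
      ≤ a * (y j.succ - y j.castSucc)) :
    lebC m L' ≤ lebC m L / (1 - a) := by
  have hΛ (x : ℝ) (hx : x ∈ Icc (-1 : ℝ) 1) : ∑ k, |(L k).eval x| ≤ lebC m L :=
    sum_abs_eval_le_lebC L hx
  set B : Matrix (Fin m) (Fin m) ℝ :=
    Matrix.of fun i k => segAvg (w k.castSucc) (w k.succ) fun x => (L' i).eval x
  set F : Matrix (Fin m) (Fin m) ℝ :=
    Matrix.of fun k j => segAvg (y j.castSucc) (y j.succ) fun x => (L k).eval x
  have hexp (i : Fin m) : L' i = ∑ k, B i k • L k := hL.eq_sum_segAvg_smul hw (hL'.1 i)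
  have hBF : B * F = 1 := by
    ext i j
    rw [Matrix.mul_apply, Matrix.one_apply, ← hL'.2 i j, hexp i, segAvg_sum_smul]
    rfl
  have hF (j : Fin m) : ∑ k, |(F - 1) k j| ≤ a := by
    have hlen : 0 < y j.succ - y j.castSucc := sub_pos.2 (hy j.castSucc_lt_succ)
    have hsum := sum_abs_segAvg_sub_segAvg_le hΛ (hyI _) (hyI _) (hwI _) (hwI _)
      (hy j.castSucc_lt_succ) (hw j.castSucc_lt_succ)
    simp only [hL.2] at hsum
    refine le_of_mul_le_mul_left ?_ hlen
    simp only [Matrix.sub_apply, Matrix.one_apply, F, Matrix.of_apply]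
    linarith [hclose j]
  apply lebC_le
  intro x hx
  calc ∑ i, |(L' i).eval x| ≤ (1 - a)⁻¹ * ∑ k, |(L k).eval x| :=
        sum_abs_eval_le_of_eq_sum_smul hexp (Matrix.sum_abs_le_of_mul_eq_one hBF ha hF) x
    _ ≤ (1 - a)⁻¹ * lebC m L :=
          mul_le_mul_of_nonneg_left (hΛ x hx) (inv_nonneg.2 (sub_pos.2 ha).le)
    _ = lebC m L / (1 - a) := by rw [div_eq_inv_mul]

noncomputable def chebLobatto (m : ℕ) (t : ℝ) : ℝ := -cos (t * π / m)

theorem chebLobatto_mem_Icc (m : ℕ) (t : ℝ) : chebLobatto m t ∈ Icc (-1 : ℝ) 1 :=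
  ⟨neg_le_neg (cos_le_one _), neg_le.1 (neg_one_le_cos _)⟩

theorem chebLobatto_zero (m : ℕ) : chebLobatto m 0 = -1 := by simp [chebLobatto]

theorem chebLobatto_self (hm : m ≠ 0) : chebLobatto m m = 1 := by
  have hm' : (m : ℝ) ≠ 0 := by exact_mod_cast hm
  simp [chebLobatto, mul_div_cancel_left₀ π hm']

theorem chebLobatto_self_sub (hm : m ≠ 0) (t : ℝ) : chebLobatto m (m - t) = -chebLobatto m t := by
  have : (m - t) * π / m = π - t * π / m := by field_simp
  simp [chebLobatto, this, cos_pi_sub]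

theorem strictMonoOn_chebLobatto (hm : m ≠ 0) : StrictMonoOn (chebLobatto m) (Icc 0 m) := by
  have hm' : (0 : ℝ) < m := by positivity
  intro s hs t ht hst
  have hmaps {u : ℝ} (hu : u ∈ Icc (0 : ℝ) m) : u * π / m ∈ Icc 0 π :=
    ⟨by have := hu.1; positivity, by rw [div_le_iff₀ hm']; nlinarith [hu.2, pi_pos]⟩
  exact neg_lt_neg (strictAntiOn_cos (hmaps hs) (hmaps ht) (by gcongr))

theorem strictMono_chebLobatto_fin (hm : m ≠ 0) :
    StrictMono fun i : Fin (m + 1) => chebLobatto m i := fun i j hij =>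
  strictMonoOn_chebLobatto hm ⟨by positivity, by exact_mod_cast i.is_le⟩
    ⟨by positivity, by exact_mod_cast j.is_le⟩ (by exact_mod_cast hij)

theorem chebLobatto_add_one_sub (m : ℕ) (t : ℝ) :
    chebLobatto m (t + 1) - chebLobatto m t
      = 2 * sin ((2 * t + 1) * π / (2 * m)) * sin (π / (2 * m)) := by
  rw [chebLobatto, chebLobatto, neg_sub_neg, cos_sub_cos]
  have h₁ : (t * π / m + (t + 1) * π / m) / 2 = (2 * t + 1) * π / (2 * m) := by ring
  have h₂ : (t * π / m - (t + 1) * π / m) / 2 = -(π / (2 * m)) := by ring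
  rw [h₁, h₂, sin_neg]
  ring

theorem mul_le_sin_of_mem_Icc {δ θ : ℝ} (hθ : θ ∈ Icc δ (π - δ)) (hδ₀ : 0 ≤ δ) :
    2 / π * δ ≤ sin θ := by
  rcases le_total θ (π / 2) with h | h
  · exact (mul_le_mul_of_nonneg_left hθ.1 (by positivity)).trans (mul_le_sin (hδ₀.trans hθ.1) h)
  · rw [← sin_pi_sub]
    exact (mul_le_mul_of_nonneg_left (by linarith [hθ.2]) (by positivity)).trans
      (mul_le_sin (by linarith [hθ.2]) (by linarith))

theorem three_div_sq_le_chebLobatto_one_sub_zero (hm : 2 ≤ m) :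
    3 / (m : ℝ) ^ 2 ≤ chebLobatto m 1 - chebLobatto m 0 := by
  have hm' : (2 : ℝ) ≤ m := by exact_mod_cast hm
  set x := π / (2 * m) with hx
  have hx₀ : 0 < x := by positivity
  have hxm : x * m = π / 2 := by rw [hx]; field_simp
  have hx₁ : x ≤ π / 4 := by
    rw [hx, div_le_div_iff₀ (by positivity) (by norm_num)]; nlinarith [pi_pos]
  -- `sin x ≥ x - x³/6` is sharp enough here, whereas Jordan's inequality only gives `2 / m²`
  have hsin : 1.3 ≤ sin x * m := by
    have hsq : x ^ 2 ≤ 0.63 := by nlinarith [pi_lt_d2]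
    calc (1.3 : ℝ) ≤ π / 2 * (1 - 0.63 / 6) := by linarith [pi_gt_three]
      _ ≤ π / 2 * (1 - x ^ 2 / 6) := by gcongr
      _ = (x - x ^ 3 / 6) * m := by rw [← hxm]; ring
      _ ≤ sin x * m := by gcongr; exact sin_ge_sub_cube hx₀.le
  have hdiff : chebLobatto m 1 - chebLobatto m 0 = 2 * sin x ^ 2 := by
    simpa [sq, mul_assoc] using chebLobatto_add_one_sub m 0
  rw [hdiff, div_le_iff₀ (by positivity)]
  nlinarith

theorem six_div_sq_le_chebLobatto_add_one_sub {t : ℝ} (ht₁ : 1 ≤ t) (ht₂ : t + 2 ≤ m) :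
    6 / (m : ℝ) ^ 2 ≤ chebLobatto m (t + 1) - chebLobatto m t := by
  have hm : (0 : ℝ) < m := by linarith
  have hs₁ : 1 / (m : ℝ) ≤ sin (π / (2 * m)) :=
    calc 1 / (m : ℝ) = 2 / π * (π / (2 * m)) := by field_simp
      _ ≤ _ := mul_le_sin (by positivity)
          (div_le_div_of_nonneg_left pi_pos.le two_pos (by linarith))
  have hs₂ : 3 / (m : ℝ) ≤ sin ((2 * t + 1) * π / (2 * m)) := by
    have hlow : 3 * π / (2 * m) ≤ (2 * t + 1) * π / (2 * m) := by gcongr; linarith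
    have hhigh : (2 * t + 1) * π / (2 * m) ≤ π - 3 * π / (2 * m) := by
      rw [show π - 3 * π / (2 * m) = (2 * m - 3) * π / (2 * m) by field_simp]
      gcongr
      linarith
    calc 3 / (m : ℝ) = 2 / π * (3 * π / (2 * m)) := by field_simp
      _ ≤ _ := mul_le_sin_of_mem_Icc ⟨hlow, hhigh⟩ (by positivity)
  rw [chebLobatto_add_one_sub]
  calc 6 / (m : ℝ) ^ 2 = 2 * (3 / m) * (1 / m) := by ring
    _ ≤ 2 * sin ((2 * t + 1) * π / (2 * m)) * sin (π / (2 * m)) := by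
        gcongr
        exact mul_nonneg zero_le_two ((by positivity : (0 : ℝ) ≤ 3 / m).trans hs₂)

theorem three_mul_sum_abs_sub_chebLobatto_le (hm : 2 ≤ m) {n : ℝ} (hn : 0 < n)
    {y : Fin (m + 1) → ℝ} (hy₀ : y 0 = -1) (hym : y (Fin.last m) = 1)
    (hclose : ∀ i : Fin (m + 1), |y i - chebLobatto m i| ≤ 1 / n) (j : Fin m) :
    3 * n * (|y j.castSucc - chebLobatto m j.castSucc| + |y j.succ - chebLobatto m j.succ|)
      ≤ m ^ 2 * (chebLobatto m j.succ - chebLobatto m j.castSucc) := by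
  have hm₀ : m ≠ 0 := by omega
  set d : Fin (m + 1) → ℝ := fun i => |y i - chebLobatto m i|
  have hd (i : Fin (m + 1)) : n * d i ≤ 1 := by
    have := mul_le_mul_of_nonneg_left (hclose i) hn.le
    rwa [mul_one_div_cancel hn.ne'] at this
  have hd₀ : d 0 = 0 := by simp [d, hy₀, chebLobatto_zero]
  have hdm : d (Fin.last m) = 0 := by simp [d, hym, chebLobatto_self hm₀]
  have hend := three_div_sq_le_chebLobatto_one_sub_zero hm
  rw [div_le_iff₀ (by positivity)] at hend
  have hsucc : ((j.succ : ℕ) : ℝ) = (j : ℝ) + 1 := by simp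
  change 3 * n * (d j.castSucc + d j.succ) ≤ _
  rw [Fin.val_castSucc, hsucc]
  -- the end segments are the shortest, but there one of the two mock nodes is exact
  suffices n * (d j.castSucc + d j.succ) ≤ 1 ∧ 3 ≤ m ^ 2 * (chebLobatto m (j + 1) - chebLobatto m j)
      ∨ n * (d j.castSucc + d j.succ) ≤ 2 ∧ 6 ≤ m ^ 2 * (chebLobatto m (j + 1) - chebLobatto m j) by
    rcases this with ⟨h₁, h₂⟩ | ⟨h₁, h₂⟩ <;> nlinarith
  by_cases hj₀ : (j : ℕ) = 0
  · have hcs : j.castSucc = 0 := Fin.ext hj₀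
    left
    refine ⟨by rw [hcs, hd₀, zero_add]; exact hd _, ?_⟩
    simpa [hj₀, mul_comm] using hend
  by_cases hjm : (j : ℕ) + 1 = m
  · have hsucc' : j.succ = Fin.last m := Fin.ext (by simpa using hjm)
    have hj : (j : ℝ) = m - 1 := by
      have : ((j : ℕ) : ℝ) + 1 = m := by exact_mod_cast hjm
      linarith
    left
    refine ⟨by rw [hsucc', hdm, add_zero]; exact hd _, ?_⟩
    rw [hj, sub_add_cancel, chebLobatto_self hm₀, chebLobatto_self_sub hm₀]
    rw [chebLobatto_zero] at hend
    linarith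
  · right
    refine ⟨by linarith [hd j.castSucc, hd j.succ], ?_⟩
    have := six_div_sq_le_chebLobatto_add_one_sub (t := (j : ℝ))
      (by exact_mod_cast Nat.one_le_iff_ne_zero.2 hj₀)
      (by exact_mod_cast (show (j : ℕ) + 2 ≤ m by omega))
    rw [div_le_iff₀ (by positivity)] at this
    linarith

theorem two_mul_sum_abs_sub_chebLobatto_le (hm : 2 ≤ m) {n : ℝ} (hn : 0 < n)
    {y : Fin (m + 1) → ℝ} (hy₀ : y 0 = -1) (hym : y (Fin.last m) = 1)
    (hclose : ∀ i : Fin (m + 1), |y i - chebLobatto m i| ≤ 1 / n) {Λ a : ℝ} (ha : 0 ≤ a)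
    (haΛ : a ≤ Λ) (hΛn : Λ * m ^ 2 ≤ a * n) (j : Fin m) :
    2 * Λ * (|y j.castSucc - chebLobatto m j.castSucc| + |y j.succ - chebLobatto m j.succ|)
      ≤ a * (y j.succ - y j.castSucc) := by
  have hgap := three_mul_sum_abs_sub_chebLobatto_le hm hn hy₀ hym hclose j
  set d₀ := |y j.castSucc - chebLobatto m j.castSucc|
  set d₁ := |y j.succ - chebLobatto m j.succ|
  set h := chebLobatto m j.succ - chebLobatto m j.castSucc
  have hlen : h - (d₀ + d₁) ≤ y j.succ - y j.castSucc := by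
    linarith [neg_abs_le (y j.succ - chebLobatto m j.succ),
      le_abs_self (y j.castSucc - chebLobatto m j.castSucc)]
  have hd : 0 ≤ d₀ + d₁ := by positivity
  have hh : 0 ≤ h :=
    sub_nonneg.2 ((strictMono_chebLobatto_fin (by omega)).monotone j.castSucc_le_succ)
  have h3 : 3 * Λ * (d₀ + d₁) ≤ a * h := by
    refine le_of_mul_le_mul_right ?_ hn
    calc 3 * Λ * (d₀ + d₁) * n = Λ * (3 * n * (d₀ + d₁)) := by ring
      _ ≤ Λ * (m ^ 2 * h) := by gcongr; linarith
      _ = Λ * m ^ 2 * h := by ring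
      _ ≤ a * n * h := by gcongr
      _ = a * h * n := by ring
  calc 2 * Λ * (d₀ + d₁) ≤ a * (h - (d₀ + d₁)) := by linarith [mul_le_mul_of_nonneg_right haΛ hd]
    _ ≤ a * (y j.succ - y j.castSucc) := mul_le_mul_of_nonneg_left hlen ha

theorem eq_of_abs_sub_le_of_mem_grid {n k l : ℕ} (hn : 0 < n) {x : ℝ} (hx : x = -1 + 2 * k / n)
    (hxl : |x - (-1 + 2 * l / n)| ≤ 1 / n) : x = -1 + 2 * l / n := by
  have hn' : (0 : ℝ) < n := by exact_mod_cast hn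
  have hkl : |2 * ((k : ℝ) - l)| ≤ 1 := by
    rw [hx, show -1 + 2 * (k : ℝ) / n - (-1 + 2 * l / n) = 2 * (k - l) / n by ring, abs_div,
      abs_of_pos hn', div_le_div_iff_of_pos_right hn'] at hxl
    exact hxl
  rw [abs_le] at hkl
  have : k = l := by
    have h₁ : 2 * k ≤ 2 * l + 1 := by exact_mod_cast (by linarith : (2 * k : ℝ) ≤ 2 * l + 1)
    have h₂ : 2 * l ≤ 2 * k + 1 := by exact_mod_cast (by linarith : (2 * l : ℝ) ≤ 2 * k + 1)
    omega
  rw [hx, this]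

theorem neg_one_add_two_mul_div_mem_Icc {k n : ℕ} (hk : k ≤ n) :
    (-1 + 2 * k / n : ℝ) ∈ Icc (-1 : ℝ) 1 := by
  have : (k : ℝ) / n ≤ 1 := div_le_one_of_le₀ (by exact_mod_cast hk) (by positivity)
  have h₀ : 0 ≤ 2 * (k : ℝ) / n := by positivity
  have h₁ : 2 * (k : ℝ) / n ≤ 2 := by rw [mul_div_assoc]; linarith
  exact ⟨by linarith, by linarith⟩

theorem endpoints_eq_of_mem_grid (hm : m ≠ 0) {n : ℕ} (hn : 0 < n) {y : Fin (m + 1) → ℝ}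
    (k : Fin (m + 1) → ℕ) (hy : ∀ i, y i = -1 + 2 * k i / n)
    (hclose : ∀ i : Fin (m + 1), |y i - chebLobatto m i| ≤ 1 / n) :
    y 0 = -1 ∧ y (Fin.last m) = 1 := by
  have hgrid₀ : (-1 + 2 * (0 : ℕ) / n : ℝ) = -1 := by simp
  have hgrid₁ : (-1 + 2 * n / n : ℝ) = 1 := by field_simp; ring
  have h₀ : |y 0 - (-1 + 2 * (0 : ℕ) / n)| ≤ 1 / n := by
    rw [hgrid₀]; simpa [chebLobatto_zero] using hclose 0
  have h₁ : |y (Fin.last m) - (-1 + 2 * n / n)| ≤ 1 / n := by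
    rw [hgrid₁]; simpa [chebLobatto_self hm] using hclose (Fin.last m)
  rw [eq_of_abs_sub_le_of_mem_grid hn (hy 0) h₀, hgrid₀,
    eq_of_abs_sub_le_of_mem_grid hn (hy _) h₁, hgrid₁]
  exact ⟨rfl, rfl⟩

end SegmentalInterpolation

open SegmentalInterpolation in
/-- Logarithmic growth of the Lebesgue constant for the concatenated mock-Chebyshev
segments (Theorem 2). -/
theorem stmt_9 (m : ℕ) (hm : 2 ≤ m) (c a : ℝ) (ha0 : 0 < a) (ha1 : a < 1) (hc : 1 ≤ c)
    -- the Chebyshev segments `[x_{i-1}^CL, x_i^CL]`, `x_i^CL = -cos(iπ/m)`, are unisolvent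
    -- for `ℙ_{m-1}`, with Lagrange basis `LCL` and Lebesgue constant ≤ `c (log m + π/2)`
    (LCL : Fin m → Polynomial ℝ)
    (hCLdeg : ∀ i, LCL i ∈ Polynomial.degreeLT ℝ m)
    (hCLdelta : ∀ i j : Fin m,
      segAvg (-Real.cos ((j : ℝ) * π / m)) (-Real.cos (((j : ℝ) + 1) * π / m))
        (fun x => (LCL i).eval x) = if i = j then 1 else 0)
    (hLebCL : lebC m LCL ≤ c * (Real.log m + π / 2))
    (n : ℕ) (hn : c / a * (m : ℝ) ^ 2 * (Real.log m + π / 2) ≤ (n : ℝ))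
    -- mock-Chebyshev nodes: increasing points of the equispaced grid `X^eq_{n+1}`
    -- within `1/n` of the Chebyshev–Lobatto nodes
    (k : Fin (m + 1) → Fin (n + 1)) (xMC : Fin (m + 1) → ℝ)
    (hxMC : ∀ i, xMC i = -1 + 2 * (k i : ℝ) / n)
    (hmono : StrictMono xMC)
    (hclose : ∀ i : Fin (m + 1), |xMC i - (-Real.cos ((i : ℝ) * π / m))| ≤ 1 / n) :
    -- the concatenated mock-Chebyshev segments are unisolvent for `ℙ_{m-1}` …
    Function.Bijective (fun p : Polynomial.degreeLT ℝ m => fun i : Fin m =>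
      segAvg (xMC i.castSucc) (xMC i.succ) fun x => Polynomial.eval x (p : Polynomial ℝ)) ∧
    -- … and their Lebesgue constant is at most `c/(1-a) (log m + π/2)`
    ∀ LMC : Fin m → Polynomial ℝ,
      (∀ i, LMC i ∈ Polynomial.degreeLT ℝ m) →
      (∀ i j : Fin m, segAvg (xMC j.castSucc) (xMC j.succ) (fun x => (LMC i).eval x)
          = if i = j then 1 else 0) →
      lebC m LMC ≤ c / (1 - a) * (Real.log m + π / 2) := by
  refine ⟨segAvgMap_bijective hmono, fun LMC hMCdeg hMCdelta => ?_⟩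
  have hm₀ : m ≠ 0 := by omega
  have hCL : IsSegLagrangeBasis (fun i : Fin (m + 1) => chebLobatto m i) LCL :=
    ⟨hCLdeg, fun i j => by simpa [chebLobatto] using hCLdelta i j⟩
  set Λ := c * (Real.log m + π / 2) with hΛ
  have haΛ : a ≤ Λ := by
    have : 1 ≤ Real.log m + π / 2 := by
      linarith [Real.log_nonneg (show (1 : ℝ) ≤ m by exact_mod_cast (by omega : 1 ≤ m)),
        pi_gt_three]
    exact ha1.le.trans (one_le_mul_of_one_le_of_one_le hc this)
  have hΛn : Λ * m ^ 2 ≤ a * n := by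
    calc Λ * m ^ 2 = a * (c / a * m ^ 2 * (Real.log m + π / 2)) := by rw [hΛ]; field_simp
      _ ≤ a * n := by gcongr
  have hn₀ : 0 < n := by
    have : (0 : ℝ) < (m : ℝ) ^ 2 := by positivity
    exact_mod_cast (by nlinarith : (0 : ℝ) < n)
  obtain ⟨hy₀, hym⟩ := endpoints_eq_of_mem_grid hm₀ hn₀ (fun i => k i) hxMC hclose
  calc lebC m LMC ≤ lebC m LCL / (1 - a) :=
        hCL.lebC_le_div_one_sub ⟨hMCdeg, hMCdelta⟩ (strictMono_chebLobatto_fin hm₀) hmono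
          (fun _ => chebLobatto_mem_Icc _ _)
          (fun i => hxMC i ▸ neg_one_add_two_mul_div_mem_Icc (k i).is_le) ha1
          fun j => (by gcongr : _ ≤ 2 * Λ * _).trans
            (two_mul_sum_abs_sub_chebLobatto_le hm (Nat.cast_pos.2 hn₀) hy₀ hym hclose ha0.le
              haΛ hΛn j)
    _ ≤ Λ / (1 - a) := by gcongr
    _ = c / (1 - a) * (Real.log m + π / 2) := by ring
end

section
/- Let ε > 0 and m ≥ 1 be given, and let n ∈ ℕ satisfy n ≥ max{8m²/π², 2/ε}. Then there exist pairwise distinct indices ι_1, …, ι_m ∈ {1, …, n} such that the equispaced segments s_{ι_i} = [x_{ι_i−1}, x_{ι_i}] of S^eq_n satisfy x_i^CF ∈ s_{ι_i} and |s_{ι_i}| ≤ ε for all i = 1, …, m; i.e., the m Chebyshev nodes lie in m pairwise distinct equispaced segments, each of length at most ε. -/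
open Real Set

/-!
A point `x ∈ [-1, 1)` lies in the equispaced segment of index `⌊n (x + 1) / 2⌋`, and two points
with the same index are at most `2/n` apart. Writing `h = π/(2m)`, two Chebyshev nodes differ by
`cos((2i+1)h) - cos((2j+1)h) = 2 sin((i+j+1)h) sin((j-i)h) ≥ 2 · (2/m) · (1/m)` by Jordan's
inequality `sin x ≥ 2x/π`, whereas `n ≥ 8m²/π²` makes `2/n ≤ π²/(4m²) < 4/m²`.
-/

noncomputable def segmentIndex (n : ℕ) (x : ℝ) : ℕ := ⌊n * (x + 1) / 2⌋₊

noncomputable def chebyshevNode (m i : ℕ) : ℝ := cos ((2 * i + 1) * π / (2 * m))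

section Segment

variable {n : ℕ} {x y : ℝ}

theorem segmentIndex_lt (hn : 0 < n) (hx : x < 1) : segmentIndex n x < n :=
  (Nat.floor_lt' hn.ne').2 (by nlinarith [(Nat.cast_pos.2 hn : (0 : ℝ) < n)])

theorem mem_Icc_segmentIndex (hn : 0 < n) (hx : -1 ≤ x) :
    x ∈ Icc (-1 + 2 * (segmentIndex n x : ℝ) / n)
      (-1 + 2 * ((segmentIndex n x : ℝ) + 1) / n) := by
  have hn' : (0 : ℝ) < n := Nat.cast_pos.2 hn
  have hx' : 0 ≤ x + 1 := by linarith
  have hfloor_le : (segmentIndex n x : ℝ) ≤ n * (x + 1) / 2 := Nat.floor_le (by positivity)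
  have hlt_floor : n * (x + 1) / 2 < segmentIndex n x + 1 := Nat.lt_floor_add_one _
  have hlower : 2 * (segmentIndex n x : ℝ) / n ≤ x + 1 := by rw [div_le_iff₀ hn']; linarith
  have hupper : x + 1 ≤ 2 * ((segmentIndex n x : ℝ) + 1) / n := by rw [le_div_iff₀ hn']; linarith
  constructor <;> linarith

theorem sub_le_of_segmentIndex_eq (hn : 0 < n) (hx : -1 ≤ x) (hy : -1 ≤ y)
    (h : segmentIndex n x = segmentIndex n y) : x - y ≤ 2 / n := by
  have hx' := (mem_Icc_segmentIndex hn hx).2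
  have hy' := (mem_Icc_segmentIndex hn hy).1
  rw [h] at hx'
  calc x - y
      ≤ (-1 + 2 * ((segmentIndex n y : ℝ) + 1) / n) - (-1 + 2 * (segmentIndex n y : ℝ) / n) :=
        sub_le_sub hx' hy'
    _ = 2 / n := by ring

end Segment

theorem two_div_pi_mul_le_sin {δ x : ℝ} (hδ : 0 ≤ δ) (hx : δ ≤ x) (hx' : x ≤ π - δ) :
    2 / π * δ ≤ sin x := by
  have hδx : 2 / π * δ ≤ 2 / π * x := by gcongr
  rcases le_total x (π / 2) with h | h
  · exact hδx.trans (mul_le_sin (hδ.trans hx) h)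
  · rw [← sin_pi_sub]
    exact (mul_le_mul_of_nonneg_left (by linarith) (by positivity)).trans
      (mul_le_sin (by linarith) (by linarith))

section Chebyshev

variable {m i j : ℕ}

theorem chebyshevNode_lt_one (hi : i < m) : chebyshevNode m i < 1 := by
  have hm : (0 : ℝ) < m := by exact_mod_cast (Nat.zero_le i).trans_lt hi
  have hi' : (i : ℝ) + 1 ≤ m := by exact_mod_cast hi
  refine (cos_lt_cos_of_nonneg_of_le_pi le_rfl ?_ (by positivity)).trans_eq cos_zero
  rw [div_le_iff₀ (by positivity)]
  nlinarith [pi_pos]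

theorem four_div_sq_le_chebyshevNode_sub (hij : i < j) (hj : j < m) :
    4 / (m : ℝ) ^ 2 ≤ chebyshevNode m i - chebyshevNode m j := by
  have hm : (0 : ℝ) < m := by exact_mod_cast (Nat.zero_le i).trans_lt (hij.trans hj)
  have hij' : (i : ℝ) + 1 ≤ j := by exact_mod_cast hij
  have hj' : (j : ℝ) + 1 ≤ m := by exact_mod_cast hj
  set h := π / (2 * m) with h_def
  have hh : 0 < h := by positivity
  have hπ : π = 2 * m * h := by rw [h_def]; field_simp
  have hsum : 2 / m ≤ sin ((i + j + 1) * h) := by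
    convert two_div_pi_mul_le_sin (δ := 2 * h) (by positivity) _ _ using 1
    · rw [hπ]; field_simp
    · nlinarith
    · nlinarith
  have hdiff : 1 / m ≤ sin ((j - i) * h) := by
    convert two_div_pi_mul_le_sin (δ := h) hh.le _ _ using 1
    · rw [hπ]; field_simp
    · nlinarith
    · nlinarith
  have hcos : chebyshevNode m i - chebyshevNode m j
      = 2 * sin ((i + j + 1) * h) * sin ((j - i) * h) := by
    have hmid : ((2 * i + 1) * π / (2 * m) + (2 * j + 1) * π / (2 * m)) / 2 = (i + j + 1) * h := by
      rw [h_def]; ring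
    have hhalf : ((2 * i + 1) * π / (2 * m) - (2 * j + 1) * π / (2 * m)) / 2 = -((j - i) * h) := by
      rw [h_def]; ring
    rw [chebyshevNode, chebyshevNode, cos_sub_cos, hmid, hhalf, sin_neg]
    ring
  have hsum_nonneg : 0 ≤ sin ((i + j + 1) * h) := (by positivity : (0 : ℝ) ≤ 2 / m).trans hsum
  calc 4 / (m : ℝ) ^ 2 = 2 * ((2 / m) * (1 / m)) := by ring
    _ ≤ 2 * (sin ((i + j + 1) * h) * sin ((j - i) * h)) := by gcongr
    _ = _ := by rw [hcos]; ring

end Chebyshev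

theorem segmentIndex_chebyshevNode_injective {m n : ℕ} (hn : 8 * (m : ℝ) ^ 2 / π ^ 2 ≤ n) :
    Function.Injective fun i : Fin m => segmentIndex n (chebyshevNode m i) := by
  refine Function.Injective.of_lt_imp_ne fun i j hij heq => ?_
  have hm : (0 : ℝ) < m := by exact_mod_cast (Nat.zero_le _).trans_lt j.is_lt
  have hn' : (0 : ℝ) < n := (by positivity : (0 : ℝ) < 8 * (m : ℝ) ^ 2 / π ^ 2).trans_le hn
  have hn0 : 0 < n := by exact_mod_cast hn'
  have hgap := four_div_sq_le_chebyshevNode_sub hij j.is_lt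
  have hseg : chebyshevNode m i - chebyshevNode m j ≤ 2 / n :=
    sub_le_of_segmentIndex_eq hn0 (neg_one_le_cos _) (neg_one_le_cos _) heq
  have hsmall : 2 / (n : ℝ) < 4 / (m : ℝ) ^ 2 := by
    have hπ : π ^ 2 < 16 := by nlinarith [pi_pos, pi_lt_four]
    rw [div_le_iff₀ (by positivity)] at hn
    rw [div_lt_div_iff₀ hn' (by positivity)]
    nlinarith [mul_lt_mul_of_pos_left hπ hn']
  linarith

theorem stmt_10_general (ε : ℝ) (hε : 0 < ε) (m : ℕ) (n : ℕ)
    (hn : max (8 * (m : ℝ) ^ 2 / π ^ 2) (2 / ε) ≤ (n : ℝ)) :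
    ∃ ι : Fin m → Fin n, Function.Injective ι ∧
      (∀ i : Fin m, Real.cos ((2 * (i : ℝ) + 1) * π / (2 * m)) ∈
        Set.Icc (-1 + 2 * (ι i : ℝ) / n) (-1 + 2 * ((ι i : ℝ) + 1) / n)) ∧
      2 / (n : ℝ) ≤ ε := by
  have hnε : 2 / ε ≤ n := le_of_max_le_right hn
  have hn0 : 0 < n := by exact_mod_cast (by positivity : 0 < 2 / ε).trans_le hnε
  refine ⟨fun i => ⟨segmentIndex n (chebyshevNode m i),
      segmentIndex_lt hn0 (chebyshevNode_lt_one i.is_lt)⟩,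
    ?_, fun i => mem_Icc_segmentIndex hn0 (neg_one_le_cos _), ?_⟩
  · exact Function.Injective.of_comp (f := Fin.val)
      (segmentIndex_chebyshevNode_injective (le_of_max_le_left hn))
  · rwa [div_le_comm₀ (by exact_mod_cast hn0) hε]

/-- Quasi-nodal mock-Chebyshev segments (Lemma 2): if `n ≥ max{8m²/π², 2/ε}`, the `m`
Chebyshev nodes `x_i^CF = cos((2i-1)π/(2m))` lie in `m` pairwise distinct equispaced
segments of `S^eq_n`, each of length at most `ε`. Here the segment of index `ι i : Fin n`
is `[-1 + 2ι i/n, -1 + 2(ι i + 1)/n]`. -/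
theorem stmt_10 (ε : ℝ) (hε : 0 < ε) (m : ℕ) (hm : 1 ≤ m) (n : ℕ)
    (hn : max (8 * (m : ℝ) ^ 2 / π ^ 2) (2 / ε) ≤ (n : ℝ)) :
    ∃ ι : Fin m → Fin n, Function.Injective ι ∧
      (∀ i : Fin m, Real.cos ((2 * (i : ℝ) + 1) * π / (2 * m)) ∈
        Set.Icc (-1 + 2 * (ι i : ℝ) / n) (-1 + 2 * ((ι i : ℝ) + 1) / n)) ∧
      2 / (n : ℝ) ≤ ε :=
  stmt_10_general ε hε m n hn
end

section
/- Let s_1, …, s_n be nondegenerate segments in [a,b] with pairwise disjoint interiors, let r ≤ n, and let u_1, …, u_r be linearly independent polynomials in ℙ_{r−1}. Then the n×r matrix N = (μ_{s_i}(u_j))_{1≤i≤n, 1≤j≤r} has rank r, i.e., its columns are linearly independent. -/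
/-!
By the mean value theorem for integrals, a polynomial whose average over a nondegenerate segment
vanishes has a root in the interior of that segment. A polynomial of degree `< n` with vanishing
averages over `n` segments with pairwise disjoint interiors thus has `n` distinct roots, so it
is zero. Hence the averaging map `p ↦ (μ_{s_i}(p))_i` is injective on `ℙ_{n-1} ⊇ ℙ_{r-1}`, and
it maps the linearly independent `u_j` to the columns of the matrix.
-/

open Real Set Polynomial

theorem segAvg_eq_interval_average (α β : ℝ) (f : ℝ → ℝ) :
    segAvg α β f = ⨍ x in α..β, f x := by
  rw [interval_average_eq, smul_eq_mul, segAvg]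

theorem exists_mem_Ioo_eq_zero_of_segAvg_eq_zero {α β : ℝ} {f : ℝ → ℝ} (hαβ : α < β)
    (hf : ContinuousOn f (Icc α β)) (h : segAvg α β f = 0) : ∃ x ∈ Ioo α β, f x = 0 := by
  obtain ⟨x, hx, hfx⟩ := exists_eq_interval_average hαβ.ne (by rwa [uIcc_of_le hαβ.le])
  rw [uIoo_of_le hαβ.le] at hx
  exact ⟨x, hx, by rw [hfx, ← segAvg_eq_interval_average, h]⟩

noncomputable def Polynomial.lsegAvg (α β : ℝ) : ℝ[X] →ₗ[ℝ] ℝ where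
  toFun p := segAvg α β fun x => p.eval x
  map_add' p q := by
    simp only [segAvg, eval_add, intervalIntegral.integral_add
      (p.continuous.intervalIntegrable α β) (q.continuous.intervalIntegrable α β), mul_add]
  map_smul' c p := by
    simp only [segAvg, eval_smul, smul_eq_mul, intervalIntegral.integral_const_mul,
      RingHom.id_apply]
    ring

theorem Polynomial.eq_zero_of_segAvg_eq_zero {ι : Type*} [Fintype ι] {lo hi : ι → ℝ}
    (hseg : ∀ i, lo i < hi i)
    (hdisj : Pairwise fun i j => Disjoint (Ioo (lo i) (hi i)) (Ioo (lo j) (hi j)))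
    {p : ℝ[X]} (hp : p ∈ degreeLT ℝ (Fintype.card ι))
    (h : ∀ i, segAvg (lo i) (hi i) (fun x => p.eval x) = 0) : p = 0 := by
  choose x hx hroot using fun i =>
    exists_mem_Ioo_eq_zero_of_segAvg_eq_zero (hseg i) p.continuous.continuousOn (h i)
  have hinj : Function.Injective x := fun i j hij => by
    by_contra hne
    exact (hdisj hne).ne_of_mem (hx i) (hx j) hij
  exact eq_zero_of_degree_lt_of_eval_index_eq_zero Finset.univ hinj.injOn
    (by rwa [Finset.card_univ, ← mem_degreeLT]) fun i _ => hroot i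

theorem stmt_14_general (n r : ℕ) (hrn : r ≤ n)
    (lo hi : Fin n → ℝ)
    (hseg : ∀ i, lo i < hi i)
    (hdisj : ∀ i j, i ≠ j → Set.Ioo (lo i) (hi i) ∩ Set.Ioo (lo j) (hi j) = ∅)
    (u : Fin r → Polynomial ℝ)
    (hu : ∀ j, u j ∈ Polynomial.degreeLT ℝ r)
    (huli : LinearIndependent ℝ u) :
    (Matrix.of fun (i : Fin n) (j : Fin r) =>
      segAvg (lo i) (hi i) fun x => (u j).eval x).rank = r := by
  let avg : ℝ[X] →ₗ[ℝ] (Fin n → ℝ) := LinearMap.pi fun i => lsegAvg (lo i) (hi i)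
  have hker : Disjoint (degreeLT ℝ n) (LinearMap.ker avg) :=
    Submodule.disjoint_def.mpr fun p hp hp0 =>
      eq_zero_of_segAvg_eq_zero hseg
        (fun i j hij => disjoint_iff_inter_eq_empty.mpr (hdisj i j hij)) (by simpa using hp)
        (congrFun hp0)
  have hspan : Submodule.span ℝ (range u) ≤ degreeLT ℝ n :=
    Submodule.span_le.mpr <| range_subset_iff.mpr fun j => degreeLT_mono hrn (hu j)
  have hcols : LinearIndependent ℝ (avg ∘ u) := huli.map (hker.mono_left hspan)
  rw [← Matrix.rank_transpose]
  exact hcols.rank_matrix.trans (Fintype.card_fin r)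

/-- Full column rank of the interpolation matrix: for `r ≤ n` segments with pairwise
disjoint interiors and linearly independent polynomials `u_1, …, u_r ∈ ℙ_{r-1}`, the
`n × r` matrix `(μ_{s_i}(u_j))` has rank `r`. -/
theorem stmt_14 (a b : ℝ) (n r : ℕ) (hrn : r ≤ n)
    (lo hi : Fin n → ℝ)
    (hseg : ∀ i, lo i < hi i)
    (hsub : ∀ i, Set.Icc (lo i) (hi i) ⊆ Set.Icc a b)
    (hdisj : ∀ i j, i ≠ j → Set.Ioo (lo i) (hi i) ∩ Set.Ioo (lo j) (hi j) = ∅)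
    (u : Fin r → Polynomial ℝ)
    (hu : ∀ j, u j ∈ Polynomial.degreeLT ℝ r)
    (huli : LinearIndependent ℝ u) :
    (Matrix.of fun (i : Fin n) (j : Fin r) =>
      segAvg (lo i) (hi i) fun x => (u j).eval x).rank = r :=
  stmt_14_general n r hrn lo hi hseg hdisj u hu huli
end

section
/- Let s_1, …, s_m be nondegenerate segments in [a,b] with pairwise disjoint interiors, let r ≥ m, and let u_1, …, u_r be a basis of ℙ_{r−1}. Then the m×r matrix N = (μ_{s_i}(u_j))_{1≤i≤m, 1≤j≤r} has rank m, i.e., its rows are linearly independent. -/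
/-!
A polynomial with zero mean on a segment vanishes somewhere inside it (Rolle's theorem for its
primitive), so a polynomial of degree `< m` with zero mean on `m` segments with disjoint interiors
has `m` distinct roots and is zero. Hence the segmental averages map `ℙ_{m-1}` injectively, and by
dimension count onto, `ℝ^m`. As the `u_j` span `ℙ_{r-1} ⊇ ℙ_{m-1}`, the columns of the matrix
span `ℝ^m`.
-/

open Real Set Polynomial

lemma integral_eq_zero_of_segAvg_eq_zero {a b : ℝ} (hab : a < b) {f : ℝ → ℝ}
    (h : segAvg a b f = 0) : ∫ x in a..b, f x = 0 :=
  (mul_eq_zero.1 h).resolve_left (inv_ne_zero (sub_pos.2 hab).ne')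

lemma exists_mem_Ioo_eq_zero_of_integral_eq_zero {f : ℝ → ℝ} (hf : Continuous f) {a b : ℝ}
    (hab : a < b) (h : ∫ x in a..b, f x = 0) : ∃ c ∈ Ioo a b, f c = 0 := by
  have hF : ∀ t, HasDerivAt (fun t => ∫ x in a..t, f x) (f t) t :=
    fun t => (hf.integral_hasStrictDerivAt a t).hasDerivAt
  exact exists_hasDerivAt_eq_zero hab (fun t _ => (hF t).continuousAt.continuousWithinAt)
    (by simp [h]) (fun t _ => hF t)

lemma Polynomial.eq_zero_of_integral_eq_zero_of_pairwise_disjoint {ι : Type*} [Fintype ι]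
    {lo hi : ι → ℝ} (hseg : ∀ i, lo i < hi i)
    (hdisj : Pairwise fun i j => Disjoint (Ioo (lo i) (hi i)) (Ioo (lo j) (hi j)))
    {p : ℝ[X]} (hdeg : p.natDegree < Fintype.card ι)
    (hint : ∀ i, ∫ x in lo i..hi i, p.eval x = 0) : p = 0 := by
  choose z hz hz0 using fun i =>
    exists_mem_Ioo_eq_zero_of_integral_eq_zero p.continuous (hseg i) (hint i)
  have hinj : Function.Injective z := fun i j hij => by
    by_contra hne
    exact (hdisj hne).ne_of_mem (hz i) (hz j) hij
  exact eq_zero_of_natDegree_lt_card_of_eval_eq_zero p hinj hz0 hdeg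

noncomputable def segAvgMap {ι : Type*} (lo hi : ι → ℝ) : ℝ[X] →ₗ[ℝ] ι → ℝ where
  toFun p i := segAvg (lo i) (hi i) fun x => p.eval x
  map_add' p q := by
    ext i
    simp only [segAvg, eval_add, Pi.add_apply, ← mul_add]
    rw [intervalIntegral.integral_add (p.continuous.intervalIntegrable _ _)
      (q.continuous.intervalIntegrable _ _)]
  map_smul' c p := by
    ext i
    simp only [segAvg, eval_smul, smul_eq_mul, intervalIntegral.integral_const_mul,
      RingHom.id_apply, Pi.smul_apply]
    ring

lemma injective_segAvgMap_domRestrict_degreeLT {ι : Type*} [Fintype ι] {lo hi : ι → ℝ}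
    (hseg : ∀ i, lo i < hi i)
    (hdisj : Pairwise fun i j => Disjoint (Ioo (lo i) (hi i)) (Ioo (lo j) (hi j))) :
    Function.Injective ((segAvgMap lo hi).domRestrict (degreeLT ℝ (Fintype.card ι))) := by
  rw [← LinearMap.ker_eq_bot, LinearMap.ker_eq_bot']
  rintro ⟨p, hp⟩ hp0
  rw [Submodule.mk_eq_zero]
  by_contra hne
  refine hne (eq_zero_of_integral_eq_zero_of_pairwise_disjoint hseg hdisj
    ((natDegree_lt_iff_degree_lt hne).2 (mem_degreeLT.1 hp)) fun i => ?_)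
  exact integral_eq_zero_of_segAvg_eq_zero (hseg i) (congr_fun hp0 i)

lemma surjective_segAvgMap_domRestrict_degreeLT {ι : Type*} [Fintype ι] {lo hi : ι → ℝ}
    (hseg : ∀ i, lo i < hi i)
    (hdisj : Pairwise fun i j => Disjoint (Ioo (lo i) (hi i)) (Ioo (lo j) (hi j))) :
    Function.Surjective ((segAvgMap lo hi).domRestrict (degreeLT ℝ (Fintype.card ι))) := by
  refine (LinearMap.injective_iff_surjective_of_finrank_eq_finrank ?_).1
    (injective_segAvgMap_domRestrict_degreeLT hseg hdisj)
  rw [Module.finrank_eq_card_basis (degreeLT.basis ℝ _), Module.finrank_fintype_fun_eq_card,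
    Fintype.card_fin]

lemma span_range_eq_degreeLT {K : Type*} [Field K] {n : ℕ} {u : Fin n → K[X]}
    (hu : ∀ j, u j ∈ degreeLT K n) (hli : LinearIndependent K u) :
    Submodule.span K (range u) = degreeLT K n := by
  refine Submodule.eq_of_le_of_finrank_le (Submodule.span_le.2 (range_subset_iff.2 hu)) ?_
  rw [finrank_span_eq_card hli, Module.finrank_eq_card_basis (degreeLT.basis K n)]

lemma mulVec_segAvg_eq_segAvgMap {ι κ : Type*} [Fintype κ] (lo hi : ι → ℝ) (u : κ → ℝ[X])
    (c : κ → ℝ) :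
    (Matrix.of fun i j => segAvg (lo i) (hi i) fun x => (u j).eval x).mulVec c =
      segAvgMap lo hi (∑ j, c j • u j) := by
  ext i
  rw [map_sum, Finset.sum_apply]
  refine Finset.sum_congr rfl fun j _ => ?_
  rw [map_smul, Pi.smul_apply, smul_eq_mul, mul_comm]
  rfl

lemma Matrix.rank_eq_of_surjective_mulVec {m n : Type*} [Fintype m] [Fintype n] {R : Type*}
    [CommRing R] [StrongRankCondition R] {A : Matrix m n R} (hA : Function.Surjective A.mulVec) :
    A.rank = Fintype.card m := by
  rw [Matrix.rank, LinearMap.range_eq_top.2 hA, finrank_top, Module.finrank_fintype_fun_eq_card]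

theorem stmt_15_general (m r : ℕ) (hmr : m ≤ r)
    (lo hi : Fin m → ℝ)
    (hseg : ∀ i, lo i < hi i)
    (hdisj : ∀ i j, i ≠ j → Set.Ioo (lo i) (hi i) ∩ Set.Ioo (lo j) (hi j) = ∅)
    (u : Fin r → Polynomial ℝ)
    (hu : ∀ j, u j ∈ Polynomial.degreeLT ℝ r)
    (huli : LinearIndependent ℝ u) :
    (Matrix.of fun (i : Fin m) (j : Fin r) =>
      segAvg (lo i) (hi i) fun x => (u j).eval x).rank = m := by
  have hdisj' : Pairwise fun i j => Disjoint (Ioo (lo i) (hi i)) (Ioo (lo j) (hi j)) :=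
    fun i j hij => Set.disjoint_iff_inter_eq_empty.2 (hdisj i j hij)
  refine (Matrix.rank_eq_of_surjective_mulVec fun y => ?_).trans (Fintype.card_fin m)
  obtain ⟨⟨p, hp⟩, rfl⟩ := surjective_segAvgMap_domRestrict_degreeLT hseg hdisj' y
  have hpu : p ∈ Submodule.span ℝ (range u) := by
    rw [span_range_eq_degreeLT hu huli]
    exact degreeLT_mono (by simpa using hmr) hp
  obtain ⟨c, rfl⟩ := (Submodule.mem_span_range_iff_exists_fun ℝ).1 hpu
  exact ⟨c, mulVec_segAvg_eq_segAvgMap lo hi u c⟩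

/-- Full row rank of the interpolation matrix: for `m ≤ r` segments with pairwise
disjoint interiors and a basis `u_1, …, u_r` of `ℙ_{r-1}`, the `m × r` matrix
`(μ_{s_i}(u_j))` has rank `m`. -/
theorem stmt_15 (a b : ℝ) (m r : ℕ) (hmr : m ≤ r)
    (lo hi : Fin m → ℝ)
    (hseg : ∀ i, lo i < hi i)
    (hsub : ∀ i, Set.Icc (lo i) (hi i) ⊆ Set.Icc a b)
    (hdisj : ∀ i j, i ≠ j → Set.Ioo (lo i) (hi i) ∩ Set.Ioo (lo j) (hi j) = ∅)
    (u : Fin r → Polynomial ℝ)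
    (hu : ∀ j, u j ∈ Polynomial.degreeLT ℝ r)
    (huli : LinearIndependent ℝ u) :
    (Matrix.of fun (i : Fin m) (j : Fin r) =>
      segAvg (lo i) (hi i) fun x => (u j).eval x).rank = m :=
  stmt_15_general m r hmr lo hi hseg hdisj u hu huli
end

section
/- Let n, m, r ∈ ℕ with m ≤ r ≤ n, let A ∈ ℝ^{n×r} have rank r, and let B ∈ ℝ^{m×r} have rank m. Then the block matrix M = [[2AᵀA, Bᵀ], [B, 0]] ∈ ℝ^{(r+m)×(r+m)} is invertible. -/
/-!
If `(x, y)` lies in the kernel of `[[H, Bᴴ], [B, 0]]` with `H` positive definite, then `Bx = 0`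
and `Hx + Bᴴy = 0`, so `xᴴHx = -xᴴBᴴy = -(Bx)ᴴy = 0`, forcing `x = 0`; then `Bᴴy = 0`, and
`y = 0` because `B` has full row rank. Here `H = 2AᵀA`, which is positive definite because `A`
has full column rank.
-/

open Matrix

namespace Matrix

theorem mulVec_injective_iff_rank_eq_card {m n K : Type*} [Fintype n] [Field K]
    {A : Matrix m n K} : Function.Injective A.mulVec ↔ A.rank = Fintype.card n := by
  rw [mulVec_injective_iff, linearIndependent_iff_card_eq_finrank_span, Set.finrank,
    ← rank_eq_finrank_span_cols, eq_comm]

theorem PosDef.isUnit_fromBlocks_conjTranspose_zero {m n K : Type*} [Fintype m] [Fintype n]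
    [DecidableEq m] [DecidableEq n] [Field K] [PartialOrder K] [StarRing K]
    {H : Matrix n n K} (hH : H.PosDef)
    {B : Matrix m n K} (hB : Function.Injective Bᴴ.mulVec) :
    IsUnit (fromBlocks H Bᴴ B 0) := by
  rw [← mulVec_injective_iff_isUnit, ← coe_mulVecLin, injective_iff_map_eq_zero]
  intro v hv
  obtain ⟨x, y, rfl⟩ : ∃ x y, v = Sum.elim x y :=
    ⟨v ∘ Sum.inl, v ∘ Sum.inr, (Sum.elim_comp_inl_inr v).symm⟩
  rw [coe_mulVecLin, fromBlocks_mulVec, Sum.elim_comp_inl, Sum.elim_comp_inr,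
    ← Sum.elim_zero_zero, Sum.elim_eq_iff, zero_mulVec, add_zero] at hv
  obtain ⟨hHx, hBx⟩ := hv
  rw [← Sum.elim_zero_zero, Sum.elim_eq_iff]
  have hxHx : star x ⬝ᵥ (H *ᵥ x) = 0 := by
    rw [eq_neg_of_add_eq_zero_left hHx, dotProduct_neg, dotProduct_mulVec, ← star_mulVec,
      hBx, star_zero, zero_dotProduct, neg_zero]
  have hx : x = 0 := by
    by_contra hx
    exact (hH.dotProduct_mulVec_pos hx).ne' hxHx
  rw [hx, mulVec_zero, zero_add, ← mulVec_zero Bᴴ] at hHx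
  exact ⟨hx, hB hHx⟩

end Matrix

theorem stmt_16_general (n m r : ℕ)
    (A : Matrix (Fin n) (Fin r) ℝ) (hA : A.rank = r)
    (B : Matrix (Fin m) (Fin r) ℝ) (hB : B.rank = m) :
    IsUnit (Matrix.fromBlocks ((2 : ℝ) • (A.transpose * A)) B.transpose B 0).det := by
  have hAinj : Function.Injective A.mulVec := by
    rwa [mulVec_injective_iff_rank_eq_card, Fintype.card_fin]
  have hBinj : Function.Injective Bᴴ.mulVec := by
    rwa [mulVec_injective_iff_rank_eq_card, Fintype.card_fin, rank_conjTranspose]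
  have hH : ((2 : ℝ) • (Aᴴ * A)).PosDef := (PosDef.conjTranspose_mul_self A hAinj).smul two_pos
  rw [← isUnit_iff_isUnit_det]
  simpa only [conjTranspose_eq_transpose_of_trivial] using
    hH.isUnit_fromBlocks_conjTranspose_zero hBinj

/-- Abstract nonsingularity of the KKT matrix: if `A ∈ ℝ^{n×r}` has rank `r` and
`B ∈ ℝ^{m×r}` has rank `m`, with `m ≤ r ≤ n`, then the block matrix
`[[2AᵀA, Bᵀ], [B, 0]]` is invertible. -/
theorem stmt_16 (n m r : ℕ) (hmr : m ≤ r) (hrn : r ≤ n)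
    (A : Matrix (Fin n) (Fin r) ℝ) (hA : A.rank = r)
    (B : Matrix (Fin m) (Fin r) ℝ) (hB : B.rank = m) :
    IsUnit (Matrix.fromBlocks ((2 : ℝ) • (A.transpose * A)) B.transpose B 0).det :=
  stmt_16_general n m r A hA B hB
end
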